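/- arXiv:2508.09421 — 3 statements merged into one kernel-verified Lean document; each statement's English description precedes it below -/
import Mathlib

section
/- Every ring automorphism of the polynomial ring ℤ[x,y,z] that fixes the polynomial x² + y² + z² − xyz − 2 belongs to the subgroup of automorphisms generated by the Vieta involution τ, the six coordinate permutations, and the double sign changes. (Cantat–Loray–Perepechko: the relative automorphism group of the SL₂-character variety of the once-punctured torus is generated by a single Vieta involution, S₃ permuting coordinates, and the double sign changes.) -/
/-!
Descent on the total degrees of the images of `x, y, z`. Let `φ` fix the boundary trace and let
`p, q, r` be the images of `x, y, z`, with `r` of maximal degree `≥ 2`. Since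
`pqr = p² + q² + r² − (x² + y² + z² − xyz)`, comparing degrees gives `deg p + deg q ≤ deg r`;
then `r (pq − r) = p² + q² − (x² + y² + z² − xyz)` forces `deg (pq − r) < deg r`, so composing `φ`
with a coordinate permutation and the Vieta involution strictly lowers the sum of the degrees.

When all three images have degree `≤ 1`, their degree-3 parts give `ℓ₀ ℓ₁ ℓ₂ = xyz` for their
linear parts `ℓᵢ`. The variables being prime, the `ℓᵢ` are unit multiples of the variables up to
a permutation, with product of units `1`: the linear part of `φ` is a coordinate permutation
composed with a double sign change. What remains is a translation, and a translation fixes the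
boundary trace only if it is trivial.
-/

open MvPolynomial

/-- The SL₂-character algebra of the once-punctured torus: `ℤ[x,y,z]`. -/
abbrev CharAlg : Type := MvPolynomial (Fin 3) ℤ

/-- The boundary trace `x² + y² + z² − xyz − 2`. -/
noncomputable def boundaryTrace : CharAlg :=
  X 0 ^ 2 + X 1 ^ 2 + X 2 ^ 2 - X 0 * X 1 * X 2 - 2

/-- The Vieta involution `(x,y,z) ↦ (x, y, xy − z)`. -/
def IsVieta (φ : RingAut CharAlg) : Prop :=
  φ (X 0) = X 0 ∧ φ (X 1) = X 1 ∧ φ (X 2) = X 0 * X 1 - X 2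

/-- A coordinate permutation of `x, y, z`. -/
def IsCoordPerm (φ : RingAut CharAlg) : Prop :=
  ∃ σ : Equiv.Perm (Fin 3), ∀ i, φ (X i) = X (σ i)

/-- A double sign change `(x,y,z) ↦ (ε₁x, ε₂y, ε₃z)`, `εᵢ = ±1`, `ε₁ε₂ε₃ = 1`. -/
def IsDoubleSign (φ : RingAut CharAlg) : Prop :=
  ∃ ε : Fin 3 → ℤ, (∀ i, ε i = 1 ∨ ε i = -1) ∧ ε 0 * ε 1 * ε 2 = 1 ∧
    ∀ i, φ (X i) = C (ε i) * X i

namespace MvPolynomial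

variable {σ R : Type*}

section CommSemiring

variable [CommSemiring R]

theorem homogeneousComponent_mul_of_totalDegree_le {p q : MvPolynomial σ R} {a b : ℕ}
    (hp : p.totalDegree ≤ a) (hq : q.totalDegree ≤ b) :
    homogeneousComponent (a + b) (p * q) =
      homogeneousComponent a p * homogeneousComponent b q := by
  classical
  ext d
  simp only [coeff_homogeneousComponent, coeff_mul]
  split_ifs with hd
  · refine Finset.sum_congr rfl fun x hx => ?_
    rw [Finset.HasAntidiagonal.mem_antidiagonal] at hx
    have hsum : x.1.degree + x.2.degree = a + b := by rw [← hd, ← hx, map_add]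
    by_cases h1 : x.1.degree = a
    · rw [if_pos h1, if_pos (by omega)]
    rw [if_neg h1, zero_mul]
    rcases lt_or_gt_of_ne h1 with h1 | h1
    · rw [coeff_eq_zero_of_totalDegree_lt (f := q) (d := x.2) (by
        rw [← Finsupp.degree_apply]; omega), mul_zero]
    · rw [coeff_eq_zero_of_totalDegree_lt (f := p) (d := x.1) (by
        rw [← Finsupp.degree_apply]; omega), zero_mul]
  · refine (Finset.sum_eq_zero fun x hx => ?_).symm
    rw [Finset.HasAntidiagonal.mem_antidiagonal] at hx
    have hsum : x.1.degree + x.2.degree = d.degree := by rw [← hx, map_add]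
    split_ifs with h1 h2 <;> first | omega | simp

theorem eq_C_add_homogeneousComponent_one {p : MvPolynomial σ R} (hp : p.totalDegree ≤ 1) :
    p = C (coeff 0 p) + homogeneousComponent 1 p := by
  have h : ∑ i ∈ Finset.range 2, homogeneousComponent i p = p := by
    conv_rhs => rw [← sum_homogeneousComponent p]
    refine (Finset.sum_subset (Finset.range_subset_range.2 (by omega)) fun i hi hi' => ?_).symm
    simp only [Finset.mem_range] at hi hi'
    exact homogeneousComponent_eq_zero _ _ (by omega)
  simpa [Finset.sum_range_succ] using h.symm

end CommSemiring

section Domain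

variable [CommRing R] [IsDomain R]

theorem exists_eq_C_mul_X_of_X_dvd {p : MvPolynomial σ R} {i : σ} (hp : p.totalDegree ≤ 1)
    (hdvd : X i ∣ p) : ∃ u, p = C u * X i := by
  obtain ⟨g, rfl⟩ := hdvd
  rcases eq_or_ne g 0 with rfl | hg
  · exact ⟨0, by simp⟩
  rw [totalDegree_mul_of_isDomain (X_ne_zero i) hg, totalDegree_X] at hp
  exact ⟨coeff 0 g, by rw [mul_comm, ← totalDegree_eq_zero_iff_eq_C.1 (by omega)]⟩

theorem exists_perm_of_prod_eq_prod_X {ι : Type*} [Fintype ι] {L : ι → MvPolynomial ι R}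
    (hL : ∀ i, (L i).totalDegree ≤ 1) (h : ∏ i, L i = ∏ i, X i) :
    ∃ (e : Equiv.Perm ι) (u : ι → R), ∏ i, u i = 1 ∧ ∀ i, L i = C (u i) * X (e i) := by
  classical
  have hX : ∏ i, (X i : MvPolynomial ι R) ≠ 0 :=
    Finset.prod_ne_zero_iff.2 fun i _ => X_ne_zero i
  have hdvd : ∀ j, ∃ k, X j ∣ L k := fun j => by
    have hj : X j ∣ ∏ i, L i := h ▸ Finset.dvd_prod_of_mem X (Finset.mem_univ j)
    obtain ⟨k, -, hk⟩ := X_prime.dvd_finsetProd_iff L |>.1 hj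
    exact ⟨k, hk⟩
  choose k hk using hdvd
  choose u hu using fun j => exists_eq_C_mul_X_of_X_dvd (hL _) (hk j)
  have hu0 : ∀ j, u j ≠ 0 := fun j hj => hX <| by
    rw [← h]; exact Finset.prod_eq_zero (Finset.mem_univ (k j)) (by simp [hu, hj])
  have hinj : k.Injective := fun i j hij => by
    have := congrArg (coeff (Finsupp.single i 1)) ((hu i).symm.trans (hij ▸ hu j))
    by_contra hne
    simp [coeff_C_mul, coeff_X, Finsupp.single_left_inj one_ne_zero, Ne.symm hne, hu0] at this
  set e := Equiv.ofBijective k hinj.bijective_of_finite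
  have hL' : ∀ i, L i = C (u (e.symm i)) * X (e.symm i) := fun i => by
    rw [← hu, ← Equiv.ofBijective_apply k hinj.bijective_of_finite, Equiv.apply_symm_apply]
  refine ⟨e.symm, u ∘ e.symm, ?_, hL'⟩
  apply C_injective ι R
  apply mul_right_cancel₀ hX
  conv_rhs => rw [map_one, one_mul, ← h, Finset.prod_congr rfl fun i _ => hL' i,
    Finset.prod_mul_distrib, ← map_prod, Equiv.prod_comp e.symm X]
  rfl

theorem totalDegree_mul_sub_lt {p q r K : MvPolynomial σ R}
    (hE : p ^ 2 + q ^ 2 + r ^ 2 - p * q * r = K) (hK : K.totalDegree < 2 * r.totalDegree)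
    (hp : 1 ≤ p.totalDegree) (hq : 1 ≤ q.totalDegree)
    (hpr : p.totalDegree ≤ r.totalDegree) (hqr : q.totalDegree ≤ r.totalDegree) :
    (p * q - r).totalDegree < r.totalDegree := by
  have ne_zero {t : MvPolynomial σ R} (ht : 1 ≤ t.totalDegree) : t ≠ 0 := by
    rintro rfl; simp at ht
  have hp2 := totalDegree_pow p 2
  have hq2 := totalDegree_pow q 2
  have hr2 := totalDegree_pow r 2
  have hpqr : p.totalDegree + q.totalDegree ≤ r.totalDegree := by
    have hdeg := congrArg totalDegree
      (show p * q * r = p ^ 2 + q ^ 2 + r ^ 2 - K by rw [← hE]; ring)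
    rw [totalDegree_mul_of_isDomain (mul_ne_zero (ne_zero hp) (ne_zero hq))
      (ne_zero (hp.trans hpr)), totalDegree_mul_of_isDomain (ne_zero hp) (ne_zero hq)] at hdeg
    have : (p ^ 2 + q ^ 2 + r ^ 2 - K).totalDegree ≤ 2 * r.totalDegree :=
      (totalDegree_sub _ _).trans (max_le ((totalDegree_add _ _).trans (max_le
        ((totalDegree_add _ _).trans (max_le (by omega) (by omega))) hr2)) hK.le)
    omega
  rcases eq_or_ne (p * q - r) 0 with hs | hs
  · rw [hs, totalDegree_zero]; omega
  have hdeg := congrArg totalDegree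
    (show r * (p * q - r) = p ^ 2 + q ^ 2 - K by rw [← hE]; ring)
  rw [totalDegree_mul_of_isDomain (ne_zero (hp.trans hpr)) hs] at hdeg
  have : (p ^ 2 + q ^ 2 - K).totalDegree < 2 * r.totalDegree :=
    (totalDegree_sub _ _).trans_lt (max_lt ((totalDegree_add _ _).trans_lt
      (max_lt (by omega) (by omega))) hK)
  omega

end Domain

section RingAut

theorem ringAut_apply_C (φ : RingAut (MvPolynomial σ ℤ)) (n : ℤ) : φ (C n) = C n := by
  rw [eq_intCast C n, map_intCast]

theorem ringAut_ext {φ ψ : RingAut (MvPolynomial σ ℤ)} (h : ∀ i, φ (X i) = ψ (X i)) :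
    φ = ψ :=
  RingEquiv.toRingHom_injective <|
    ringHom_ext (fun n => (ringAut_apply_C φ n).trans (ringAut_apply_C ψ n).symm) h

theorem one_le_totalDegree_ringAut_apply_X (φ : RingAut (MvPolynomial σ ℤ)) (i : σ) :
    1 ≤ (φ (X i)).totalDegree := by
  by_contra! h
  have hC := totalDegree_eq_zero_iff_eq_C.1 (Nat.lt_one_iff.1 h)
  rw [← ringAut_apply_C φ] at hC
  have := congrArg totalDegree (φ.injective hC)
  rw [totalDegree_X, totalDegree_C] at this
  exact one_ne_zero this

end RingAut

noncomputable def aevalInvolution [CommSemiring R] (v : σ → MvPolynomial σ R)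
    (hv : ∀ i, aeval v (v i) = X i) : MvPolynomial σ R ≃ₐ[R] MvPolynomial σ R :=
  have h : (aeval v).comp (aeval v) = AlgHom.id R _ :=
    algHom_ext fun i => by rw [AlgHom.comp_apply, aeval_X, hv, AlgHom.id_apply]
  AlgEquiv.ofAlgHom (aeval v) (aeval v) h h

@[simp]
theorem aevalInvolution_apply [CommSemiring R] (v : σ → MvPolynomial σ R)
    (hv : ∀ i, aeval v (v i) = X i) (p : MvPolynomial σ R) :
    aevalInvolution v hv p = aeval v p :=
  rfl

end MvPolynomial

-- Fricke: `tr [A, B] = fricke (tr A) (tr B) (tr (A * B))` for `A, B ∈ SL₂`.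
def fricke {A : Type*} [CommRing A] (x y z : A) : A :=
  x ^ 2 + y ^ 2 + z ^ 2 - x * y * z - 2

theorem map_fricke {A B F : Type*} [CommRing A] [CommRing B] [FunLike F A B]
    [RingHomClass F A B] (f : F) (x y z : A) :
    f (fricke x y z) = fricke (f x) (f y) (f z) := by
  simp [fricke, map_ofNat]

theorem fricke_eq_sum_sub_prod {A : Type*} [CommRing A] (x : Fin 3 → A) :
    fricke (x 0) (x 1) (x 2) = ∑ i, x i ^ 2 - ∏ i, x i - 2 := by
  simp [fricke, Fin.sum_univ_three, Fin.prod_univ_three]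

theorem MvPolynomial.homogeneousComponent_three_fricke {σ R : Type*} [CommRing R]
    {p q r : MvPolynomial σ R}
    (hp : p.totalDegree ≤ 1) (hq : q.totalDegree ≤ 1) (hr : r.totalDegree ≤ 1) :
    homogeneousComponent 3 (fricke p q r) =
      -(homogeneousComponent 1 p * homogeneousComponent 1 q * homogeneousComponent 1 r) := by
  have hsq {t : MvPolynomial σ R} (ht : t.totalDegree ≤ 1) :
      homogeneousComponent 3 (t ^ 2) = 0 :=
    homogeneousComponent_eq_zero _ _ ((totalDegree_pow t 2).trans_lt (by omega))
  have hpq : (p * q).totalDegree ≤ 1 + 1 := (totalDegree_mul p q).trans (by omega)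
  have htwo : homogeneousComponent 3 (2 : MvPolynomial σ R) = 0 :=
    homogeneousComponent_eq_zero _ _ (by rw [← map_ofNat C 2, totalDegree_C]; omega)
  rw [fricke, map_sub, map_sub, map_add, map_add, hsq hp, hsq hq, hsq hr, htwo,
    show 3 = 1 + 1 + 1 from rfl, homogeneousComponent_mul_of_totalDegree_le hpq hr,
    homogeneousComponent_mul_of_totalDegree_le hp hq]
  ring

namespace CharAlg

def generators : Set (RingAut CharAlg) := {ψ | IsVieta ψ ∨ IsCoordPerm ψ ∨ IsDoubleSign ψ}

theorem boundaryTrace_eq_fricke : boundaryTrace = fricke (X 0) (X 1) (X 2) := rfl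

theorem map_boundaryTrace (φ : RingAut CharAlg) :
    φ boundaryTrace = fricke (φ (X 0)) (φ (X 1)) (φ (X 2)) :=
  map_fricke φ _ _ _

noncomputable def vieta : RingAut CharAlg :=
  (aevalInvolution ![X 0, X 1, X 0 * X 1 - X 2] fun i => by fin_cases i <;> simp).toRingEquiv

theorem isVieta_vieta : IsVieta vieta := by
  simp [IsVieta, vieta]

noncomputable def coordPerm (e : Equiv.Perm (Fin 3)) : RingAut CharAlg :=
  (renameEquiv ℤ e).toRingEquiv

theorem coordPerm_apply_X (e : Equiv.Perm (Fin 3)) (i : Fin 3) :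
    coordPerm e (X i) = X (e i) :=
  rename_X e i

noncomputable def signChange (u : Fin 3 → ℤ) (hu : ∀ i, u i * u i = 1) : RingAut CharAlg :=
  (aevalInvolution (fun i => C (u i) * X i) fun i => by
    simp only [map_mul, aeval_C, aeval_X, algebraMap_eq]
    rw [← mul_assoc, ← map_mul, hu, map_one, one_mul]).toRingEquiv

theorem signChange_apply_X (u : Fin 3 → ℤ) (hu : ∀ i, u i * u i = 1) (i : Fin 3) :
    signChange u hu (X i) = C (u i) * X i := by
  simp [signChange]

theorem map_boundaryTrace_of_mem_generators {ψ : RingAut CharAlg} (hψ : ψ ∈ generators) :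
    ψ boundaryTrace = boundaryTrace := by
  rw [map_boundaryTrace]
  rcases hψ with ⟨h0, h1, h2⟩ | ⟨e, he⟩ | ⟨ε, hε1, hprod, hε⟩
  · rw [h0, h1, h2, boundaryTrace, fricke]; ring
  · rw [he, he, he, fricke_eq_sum_sub_prod (fun i => X (e i)), boundaryTrace_eq_fricke,
      fricke_eq_sum_sub_prod X, Equiv.sum_comp e fun i => X i ^ 2, Equiv.prod_comp e X]
  · have hsq : ∀ i, C (ε i) ^ 2 = (1 : CharAlg) := fun i => by
      rcases hε1 i with h | h <;> simp [h]
    have hprod' : C (ε 0) * C (ε 1) * C (ε 2) = (1 : CharAlg) := by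
      rw [← map_mul, ← map_mul, hprod, map_one]
    rw [hε, hε, hε, boundaryTrace, fricke]
    linear_combination X 0 ^ 2 * hsq 0 + X 1 ^ 2 * hsq 1 + X 2 ^ 2 * hsq 2 -
      X 0 * X 1 * X 2 * hprod'

theorem map_boundaryTrace_of_mem_closure {ψ : RingAut CharAlg}
    (hψ : ψ ∈ Subgroup.closure generators) : ψ boundaryTrace = boundaryTrace :=
  (Subgroup.closure_le (MulAction.stabilizer _ boundaryTrace)).2
    (fun _ => map_boundaryTrace_of_mem_generators) hψ

theorem eq_one_of_apply_X_eq_C_add_X {ψ : RingAut CharAlg} {c : Fin 3 → ℤ}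
    (hψ : ψ boundaryTrace = boundaryTrace) (hX : ∀ i, ψ (X i) = C (c i) + X i) : ψ = 1 := by
  rw [map_boundaryTrace, hX, hX, hX, boundaryTrace_eq_fricke] at hψ
  have hev : ∀ x y z : ℤ, fricke (c 0 + x) (c 1 + y) (c 2 + z) = fricke x y z :=
    fun x y z => by simpa [map_fricke] using congrArg (eval ![x, y, z]) hψ
  unfold fricke at hev
  -- the coefficient of `y * z` in `fricke (c 0 + x) (c 1 + y) (c 2 + z) - fricke x y z` is `-c 0`
  have hc0 : c 0 = 0 := by linear_combination -(hev 0 1 1 - hev 0 1 0 - hev 0 0 1 + hev 0 0 0)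
  have hc1 : c 1 = 0 := by linear_combination -(hev 1 0 1 - hev 1 0 0 - hev 0 0 1 + hev 0 0 0)
  have hc2 : c 2 = 0 := by linear_combination -(hev 1 1 0 - hev 1 0 0 - hev 0 1 0 + hev 0 0 0)
  exact ringAut_ext fun i => by fin_cases i <;> simp [hX, hc0, hc1, hc2]

theorem prod_homogeneousComponent_one_apply_X {φ : RingAut CharAlg}
    (hφ : φ boundaryTrace = boundaryTrace) (hdeg : ∀ i, (φ (X i)).totalDegree ≤ 1) :
    ∏ i, homogeneousComponent 1 (φ (X i)) = ∏ i, X i := by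
  have h3 := congrArg (homogeneousComponent 3)
    ((map_boundaryTrace φ).symm.trans (hφ.trans boundaryTrace_eq_fricke))
  have hX : ∀ i : Fin 3, (X i : CharAlg).totalDegree ≤ 1 := fun i => (totalDegree_X i).le
  rw [homogeneousComponent_three_fricke (hdeg 0) (hdeg 1) (hdeg 2),
    homogeneousComponent_three_fricke (hX 0) (hX 1) (hX 2), neg_inj] at h3
  simpa [Fin.prod_univ_three, homogeneousComponent_eq_self (isHomogeneous_X _ _)] using h3

theorem mem_closure_of_totalDegree_le_one {φ : RingAut CharAlg}
    (hφ : φ boundaryTrace = boundaryTrace) (hdeg : ∀ i, (φ (X i)).totalDegree ≤ 1) :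
    φ ∈ Subgroup.closure generators := by
  obtain ⟨e, u, hu, hLu⟩ := exists_perm_of_prod_eq_prod_X
    (fun i => (homogeneousComponent_isHomogeneous 1 _).totalDegree_le)
    (prod_homogeneousComponent_one_apply_X hφ hdeg)
  have hunit : ∀ i, u i = 1 ∨ u i = -1 := fun i => Int.isUnit_iff.1 <|
    isUnit_of_dvd_one (hu ▸ Finset.dvd_prod_of_mem u (Finset.mem_univ i))
  have hsq : ∀ i, u i * u i = 1 := fun i => by rcases hunit i with h | h <;> simp [h]
  set g := coordPerm e * signChange u hsq
  have hg : g ∈ Subgroup.closure generators := mul_mem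
    (Subgroup.subset_closure (Or.inr (Or.inl ⟨e, coordPerm_apply_X e⟩)))
    (Subgroup.subset_closure (Or.inr (Or.inr
      ⟨u, hunit, by simpa [Fin.prod_univ_three] using hu, signChange_apply_X u hsq⟩)))
  have hgX : ∀ i, g (X i) = homogeneousComponent 1 (φ (X i)) := fun i => by
    rw [RingAut.mul_apply, signChange_apply_X, map_mul, ringAut_apply_C, coordPerm_apply_X, hLu]
  have htr : g⁻¹ * φ = 1 := by
    refine eq_one_of_apply_X_eq_C_add_X (c := fun i => coeff 0 (φ (X i))) ?_ fun i => ?_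
    · rw [RingAut.mul_apply, hφ]
      exact map_boundaryTrace_of_mem_closure (inv_mem hg)
    · conv_lhs => rw [RingAut.mul_apply, eq_C_add_homogeneousComponent_one (hdeg i), ← hgX]
      rw [map_add, ringAut_apply_C, RingAut.inv_apply, RingEquiv.symm_apply_apply]
  exact inv_mul_eq_one.1 htr ▸ hg

noncomputable def totalDegreeSum (φ : RingAut CharAlg) : ℕ :=
  ∑ i, (φ (X i)).totalDegree

theorem totalDegreeSum_mul_coordPerm (φ : RingAut CharAlg) (e : Equiv.Perm (Fin 3)) :
    totalDegreeSum (φ * coordPerm e) = totalDegreeSum φ := by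
  simp only [totalDegreeSum, RingAut.mul_apply, coordPerm_apply_X]
  exact Equiv.sum_comp e fun i => (φ (X i)).totalDegree

theorem totalDegreeSum_mul_vieta_lt {φ : RingAut CharAlg} (hφ : φ boundaryTrace = boundaryTrace)
    (hmax : ∀ i, (φ (X i)).totalDegree ≤ (φ (X 2)).totalDegree)
    (htwo : 2 ≤ (φ (X 2)).totalDegree) :
    totalDegreeSum (φ * vieta) < totalDegreeSum φ := by
  have hK : (X 0 ^ 2 + X 1 ^ 2 + X 2 ^ 2 - X 0 * X 1 * X 2 : CharAlg).totalDegree ≤ 3 := by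
    have h2 : IsHomogeneous (X 0 ^ 2 + X 1 ^ 2 + X 2 ^ 2 : CharAlg) 2 :=
      ((isHomogeneous_X_pow 0 2).add (isHomogeneous_X_pow 1 2)).add (isHomogeneous_X_pow 2 2)
    have h3 : IsHomogeneous (X 0 * X 1 * X 2 : CharAlg) 3 :=
      ((isHomogeneous_X ℤ 0).mul (isHomogeneous_X ℤ 1)).mul (isHomogeneous_X ℤ 2)
    exact (totalDegree_sub _ _).trans (max_le (h2.totalDegree_le.trans (by norm_num))
      h3.totalDegree_le)
  have hE : φ (X 0) ^ 2 + φ (X 1) ^ 2 + φ (X 2) ^ 2 - φ (X 0) * φ (X 1) * φ (X 2) =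
      X 0 ^ 2 + X 1 ^ 2 + X 2 ^ 2 - X 0 * X 1 * X 2 := by
    rw [map_boundaryTrace, boundaryTrace, fricke] at hφ
    linear_combination hφ
  have hlt := totalDegree_mul_sub_lt hE (by omega) (one_le_totalDegree_ringAut_apply_X φ 0)
    (one_le_totalDegree_ringAut_apply_X φ 1) (hmax 0) (hmax 1)
  obtain ⟨h0, h1, h2⟩ := isVieta_vieta
  simp only [totalDegreeSum, Fin.sum_univ_three, RingAut.mul_apply, h0, h1, h2, map_sub, map_mul]
  omega

theorem exists_mem_closure_totalDegreeSum_mul_lt {φ : RingAut CharAlg}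
    (hφ : φ boundaryTrace = boundaryTrace) (hdeg : ∃ i, 2 ≤ (φ (X i)).totalDegree) :
    ∃ ψ ∈ Subgroup.closure generators, totalDegreeSum (φ * ψ) < totalDegreeSum φ := by
  obtain ⟨m, hm⟩ := Finite.exists_max fun i => (φ (X i)).totalDegree
  obtain ⟨i, hi⟩ := hdeg
  set τ := coordPerm (Equiv.swap m 2)
  have hτ : τ ∈ Subgroup.closure generators :=
    Subgroup.subset_closure (Or.inr (Or.inl ⟨_, coordPerm_apply_X _⟩))
  have hφτ : ∀ k, (φ * τ) (X k) = φ (X (Equiv.swap m 2 k)) := fun k => by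
    rw [RingAut.mul_apply, coordPerm_apply_X]
  refine ⟨τ * vieta, mul_mem hτ (Subgroup.subset_closure (Or.inl isVieta_vieta)), ?_⟩
  rw [← mul_assoc, ← totalDegreeSum_mul_coordPerm φ (Equiv.swap m 2)]
  refine totalDegreeSum_mul_vieta_lt ?_ (fun k => ?_) ?_
  · rw [RingAut.mul_apply, map_boundaryTrace_of_mem_closure hτ, hφ]
  · rw [hφτ, hφτ, Equiv.swap_apply_right]; exact hm _
  · rw [hφτ, Equiv.swap_apply_right]; exact hi.trans (hm i)

end CharAlg

/-- Every ring automorphism of `ℤ[x,y,z]` fixing `x² + y² + z² − xyz − 2` lies in the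
subgroup generated by the Vieta involution, the coordinate permutations and the double
sign changes. -/
theorem relAut_once_punctured_torus (φ : RingAut CharAlg)
    (h : φ boundaryTrace = boundaryTrace) :
    φ ∈ Subgroup.closure
      {ψ : RingAut CharAlg | IsVieta ψ ∨ IsCoordPerm ψ ∨ IsDoubleSign ψ} := by
  induction hn : CharAlg.totalDegreeSum φ using Nat.strong_induction_on generalizing φ with
  | _ n ih =>
  by_cases hlin : ∀ i, (φ (X i)).totalDegree ≤ 1
  · exact CharAlg.mem_closure_of_totalDegree_le_one h hlin
  push Not at hlin
  obtain ⟨ψ, hψ, hlt⟩ := CharAlg.exists_mem_closure_totalDegreeSum_mul_lt h hlin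
  have hφψ : φ * ψ ∈ Subgroup.closure CharAlg.generators := ih _ (hn ▸ hlt) (φ * ψ)
    (by rw [RingAut.mul_apply, CharAlg.map_boundaryTrace_of_mem_closure hψ, h]) rfl
  rw [← mul_inv_cancel_right φ ψ]
  exact mul_mem hφψ (inv_mem hψ)
end

section
/- For every element w of the free group F₂ on two generators a, b, there exists a polynomial P_w ∈ ℤ[x,y,z] such that for every commutative ring R and all matrices A, B ∈ SL(2,R), one has tr(ρ(w)) = P_w(tr(A), tr(B), tr(AB)), where ρ : F₂ → SL(2,R) is the group homomorphism determined by ρ(a) = A and ρ(b) = B. -/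
/-!
Write `x, y, z` for `tr A, tr B, tr AB`. Cayley–Hamilton gives `A² = xA - 1` and `B² = yB - 1`,
and its polarization gives `BA = (z - xy) + yA + xB - AB`. Hence the `ℤ[x, y, z]`-span of
`1, A, B, AB` is stable under left multiplication by `A` and `B`, and also by `A⁻¹ = x - A` and
`B⁻¹ = y - B`, with coefficients given by fixed integer polynomials. So
`ρ(w) = c₀ + c₁A + c₂B + c₃AB` with `cᵢ ∈ ℤ[x, y, z]` independent of `R`, and
`tr ρ(w) = 2c₀ + xc₁ + yc₂ + zc₃`.
-/

open Matrix MvPolynomial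

universe u

open scoped MatrixGroups

namespace Matrix

variable {R : Type*} [CommRing R]

theorem mul_self_fin_two (M : Matrix (Fin 2) (Fin 2) R) : M * M = trace M • M - det M • 1 := by
  ext i j
  fin_cases i <;> fin_cases j <;>
    simp [mul_apply, trace_fin_two, det_fin_two] <;> ring

theorem mul_self_fin_two_of_det_eq_one {M : Matrix (Fin 2) (Fin 2) R} (hM : det M = 1) :
    M * M = trace M • M - 1 := by
  rw [mul_self_fin_two, hM, one_smul]

theorem mul_comm_fin_two (M N : Matrix (Fin 2) (Fin 2) R) :
    N * M = (trace (M * N) - trace M * trace N) • 1 + trace N • M + trace M • N - M * N := by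
  ext i j
  fin_cases i <;> fin_cases j <;>
    simp [mul_apply, trace_fin_two] <;> ring

theorem SpecialLinearGroup.coe_inv_fin_two (A : SL(2, R)) :
    ((A⁻¹ : SL(2, R)) : Matrix (Fin 2) (Fin 2) R) =
      trace (A : Matrix (Fin 2) (Fin 2) R) • 1 - A := by
  rw [SpecialLinearGroup.coe_inv, adjugate_fin_two]
  ext i j
  fin_cases i <;> fin_cases j <;> simp [trace_fin_two]

end Matrix

noncomputable section TraceComb

variable {R : Type*} [CommRing R] (M N : Matrix (Fin 2) (Fin 2) R)

def traceCoords : Fin 3 → R := ![trace M, trace N, trace (M * N)]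

def traceComb (c : Fin 4 → MvPolynomial (Fin 3) ℤ) : Matrix (Fin 2) (Fin 2) R :=
  aeval (traceCoords M N) (c 0) • 1 + aeval (traceCoords M N) (c 1) • M +
    aeval (traceCoords M N) (c 2) • N + aeval (traceCoords M N) (c 3) • (M * N)

def combMulFst (c : Fin 4 → MvPolynomial (Fin 3) ℤ) : Fin 4 → MvPolynomial (Fin 3) ℤ :=
  ![-c 1, c 0 + X 0 * c 1, -c 3, c 2 + X 0 * c 3]

def combMulSnd (c : Fin 4 → MvPolynomial (Fin 3) ℤ) : Fin 4 → MvPolynomial (Fin 3) ℤ :=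
  ![(X 2 - X 0 * X 1) * c 1 - c 2 - X 0 * c 3, X 1 * c 1 + c 3,
    c 0 + X 0 * c 1 + X 1 * c 2 + X 2 * c 3, -c 1]

variable {M N}

theorem mul_traceComb_fst (hM : det M = 1) (c : Fin 4 → MvPolynomial (Fin 3) ℤ) :
    M * traceComb M N c = traceComb M N (combMulFst c) := by
  have hMM := mul_self_fin_two_of_det_eq_one hM
  have hMMN : M * (M * N) = trace M • (M * N) - N := by
    rw [← mul_assoc, hMM, sub_mul, smul_mul_assoc, one_mul]
  simp only [traceComb, combMulFst, traceCoords, mul_add, mul_smul_comm, mul_one, hMM, hMMN,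
    map_add, map_mul, map_neg, aeval_X, cons_val]
  module

theorem mul_traceComb_snd (hN : det N = 1) (c : Fin 4 → MvPolynomial (Fin 3) ℤ) :
    N * traceComb M N c = traceComb M N (combMulSnd c) := by
  have hNN := mul_self_fin_two_of_det_eq_one hN
  have hNM := mul_comm_fin_two M N
  have hNMN : N * (M * N) = M + trace (M * N) • N - trace M • 1 := by
    rw [← mul_assoc, hNM]
    simp only [sub_mul, add_mul, smul_mul_assoc, one_mul, mul_assoc, hNN, mul_sub, mul_smul_comm,
      mul_one]
    module
  simp only [traceComb, combMulSnd, traceCoords, mul_add, mul_smul_comm, mul_one, hNN, hNM, hNMN,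
    map_add, map_sub, map_mul, map_neg, aeval_X, cons_val]
  module

theorem inv_mul_traceComb {g : SL(2, R)} {j : Fin 3}
    (hg : trace (g : Matrix (Fin 2) (Fin 2) R) = traceCoords M N j)
    {f : (Fin 4 → MvPolynomial (Fin 3) ℤ) → Fin 4 → MvPolynomial (Fin 3) ℤ}
    (hf : ∀ c, g * traceComb M N c = traceComb M N (f c)) (c : Fin 4 → MvPolynomial (Fin 3) ℤ) :
    ((g⁻¹ : SL(2, R)) : Matrix (Fin 2) (Fin 2) R) * traceComb M N c =
      traceComb M N ((X j : MvPolynomial (Fin 3) ℤ) • c - f c) := by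
  rw [SpecialLinearGroup.coe_inv_fin_two, sub_mul, smul_mul_assoc, one_mul, hf, hg]
  simp only [traceComb, Pi.sub_apply, Pi.smul_apply, smul_eq_mul, map_sub, map_mul, aeval_X]
  module

theorem trace_traceComb (c : Fin 4 → MvPolynomial (Fin 3) ℤ) :
    trace (traceComb M N c) =
      aeval (traceCoords M N) (2 * c 0 + X 0 * c 1 + X 1 * c 2 + X 2 * c 3) := by
  simp only [traceComb, traceCoords, trace_add, trace_smul, trace_one, Fintype.card_fin,
    Nat.cast_ofNat, smul_eq_mul, map_add, map_mul, aeval_ofNat, aeval_X, cons_val]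
  ring

end TraceComb

theorem exists_traceComb_eq (w : FreeGroup (Fin 2)) :
    ∃ c : Fin 4 → MvPolynomial (Fin 3) ℤ, ∀ (R : Type u) [CommRing R]
      (ρ : FreeGroup (Fin 2) →* SL(2, R)), ((ρ w : SL(2, R)) : Matrix (Fin 2) (Fin 2) R) =
        traceComb (ρ (FreeGroup.of 0)) (ρ (FreeGroup.of 1)) c := by
  have hw : w ∈ Subgroup.closure (Set.range FreeGroup.of) := by simp
  induction hw using Subgroup.closure_induction_left with
  | one => exact ⟨![1, 0, 0, 0], fun R _ ρ => by simp [traceComb]⟩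
  | mul_left _ hx y _ ih =>
    obtain ⟨i, rfl⟩ := hx
    obtain ⟨c, hc⟩ := ih
    fin_cases i
    · refine ⟨combMulFst c, fun R _ ρ => ?_⟩
      rw [_root_.map_mul, Matrix.SpecialLinearGroup.coe_mul, hc]
      exact mul_traceComb_fst (ρ _).det_coe c
    · refine ⟨combMulSnd c, fun R _ ρ => ?_⟩
      rw [_root_.map_mul, Matrix.SpecialLinearGroup.coe_mul, hc]
      exact mul_traceComb_snd (ρ _).det_coe c
  | inv_mul_cancel _ hx y _ ih =>
    obtain ⟨i, rfl⟩ := hx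
    obtain ⟨c, hc⟩ := ih
    fin_cases i
    · refine ⟨(X 0 : MvPolynomial (Fin 3) ℤ) • c - combMulFst c, fun R _ ρ => ?_⟩
      rw [_root_.map_mul, map_inv, Matrix.SpecialLinearGroup.coe_mul, hc]
      exact inv_mul_traceComb (j := 0) rfl (mul_traceComb_fst (ρ _).det_coe) c
    · refine ⟨(X 1 : MvPolynomial (Fin 3) ℤ) • c - combMulSnd c, fun R _ ρ => ?_⟩
      rw [_root_.map_mul, map_inv, Matrix.SpecialLinearGroup.coe_mul, hc]
      exact inv_mul_traceComb (j := 1) rfl (mul_traceComb_snd (ρ _).det_coe) c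

/-- Vogt–Fricke: for every word `w` in the free group on two generators `a, b` there is a
polynomial `P_w ∈ ℤ[x,y,z]` such that for every commutative ring `R` and all
`A, B ∈ SL(2,R)`, `tr(ρ(w)) = P_w(tr A, tr B, tr AB)` where `ρ : F₂ → SL(2,R)` is the
homomorphism with `ρ(a) = A`, `ρ(b) = B`. -/
theorem exists_trace_polynomial (w : FreeGroup (Fin 2)) :
    ∃ P : MvPolynomial (Fin 3) ℤ,
      ∀ (R : Type u) [CommRing R] (A B : Matrix.SpecialLinearGroup (Fin 2) R)
        (ρ : FreeGroup (Fin 2) →* Matrix.SpecialLinearGroup (Fin 2) R),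
        ρ (FreeGroup.of 0) = A → ρ (FreeGroup.of 1) = B →
        Matrix.trace ((ρ w : Matrix.SpecialLinearGroup (Fin 2) R) :
            Matrix (Fin 2) (Fin 2) R) =
          MvPolynomial.aeval
            ![Matrix.trace (A : Matrix (Fin 2) (Fin 2) R),
              Matrix.trace (B : Matrix (Fin 2) (Fin 2) R),
              Matrix.trace ((A * B : Matrix.SpecialLinearGroup (Fin 2) R) :
                Matrix (Fin 2) (Fin 2) R)] P := by
  obtain ⟨c, hc⟩ := exists_traceComb_eq.{u} w
  refine ⟨2 * c 0 + X 0 * c 1 + X 1 * c 2 + X 2 * c 3, fun R _ A B ρ hA hB => ?_⟩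
  rw [hc R ρ, trace_traceComb, hA, hB]
  rfl
end

section
/- For all complex numbers x, y, z there exist matrices A, B ∈ SL(2,ℂ) such that tr(A) = x, tr(B) = y, and tr(AB) = z. -/
open Matrix Polynomial

/-!
Take `A = [[x, -1], [1, 0]]` and `B = [[0, u], [-u⁻¹, y]]`: both have determinant `1`, and
`tr (A * B) = u + u⁻¹`. Over `ℂ` every `z` has this form, `u` being a root of `t² - z t + 1`.
-/

theorem exists_specialLinearGroup_trace_eq_add_inv {R : Type*} [CommRing R] (x y : R) (u : Rˣ) :
    ∃ A B : SpecialLinearGroup (Fin 2) R,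
      trace (A : Matrix (Fin 2) (Fin 2) R) = x ∧
      trace (B : Matrix (Fin 2) (Fin 2) R) = y ∧
      trace ((A * B : SpecialLinearGroup (Fin 2) R) : Matrix (Fin 2) (Fin 2) R) = u + ↑u⁻¹ := by
  refine ⟨⟨!![x, -1; 1, 0], by simp [det_fin_two_of]⟩,
    ⟨!![0, ↑u; -↑u⁻¹, y], by simp [det_fin_two_of]⟩, ?_, ?_, ?_⟩
  · simp [trace_fin_two_of]
  · simp [trace_fin_two_of]
  · change trace (!![x, -1; 1, 0] * !![0, ↑u; -↑u⁻¹, y]) = _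
    rw [mul_fin_two, trace_fin_two_of]
    ring

theorem IsAlgClosed.exists_add_inv_eq {K : Type*} [Field K] [IsAlgClosed K] (z : K) :
    ∃ u : Kˣ, (u : K) + ↑u⁻¹ = z := by
  obtain ⟨u, hu⟩ := IsAlgClosed.exists_root (C 1 * X ^ 2 + C (-z) * X + C 1)
    (by rw [degree_quadratic one_ne_zero]; decide)
  simp only [IsRoot, eval_add, eval_mul, eval_pow, eval_C, eval_X] at hu
  have hu0 : u ≠ 0 := by rintro rfl; simp at hu
  refine ⟨Units.mk0 u hu0, ?_⟩
  rw [Units.val_inv_eq_inv_val, Units.val_mk0]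
  field_simp
  linear_combination hu

/-- Surjectivity of the trace coordinates on the `SL(2,ℂ)`-character variety of the
once-punctured torus: every `(x, y, z) ∈ ℂ³` is `(tr A, tr B, tr AB)` for some
`A, B ∈ SL(2,ℂ)`. -/
theorem sl2C_trace_coordinates_surjective (x y z : ℂ) :
    ∃ A B : Matrix.SpecialLinearGroup (Fin 2) ℂ,
      Matrix.trace (A : Matrix (Fin 2) (Fin 2) ℂ) = x ∧
      Matrix.trace (B : Matrix (Fin 2) (Fin 2) ℂ) = y ∧
      Matrix.trace ((A * B : Matrix.SpecialLinearGroup (Fin 2) ℂ) :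
        Matrix (Fin 2) (Fin 2) ℂ) = z := by
  obtain ⟨u, rfl⟩ := IsAlgClosed.exists_add_inv_eq z
  exact exists_specialLinearGroup_trace_eq_add_inv x y u
end
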